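/- arXiv:2108.03915 — 3 statements merged into one kernel-verified Lean document; each statement's English description precedes it below -/
import Mathlib

section
/- Let P = {p₁,…,pₙ} be a finite poset and let β ≤ γ be order ideals of P (β ⊆ γ). Let L₁ = {α ∈ I(P) : β ⊆ α ⊆ γ} and let H₁ be the additive submonoid of ℤ^{n+1} generated by {h_α : α ∈ L₁}. Then H₁ is a homologically pure subsemigroup of H; that is, for every h ∈ H₁ and every order ideal α ∈ I(P), if h − h_α ∈ H then α ∈ L₁. -/
/-!
Every `h_α` lies in the cone `{x | 0 ≤ x_p ≤ x_0}` over the unit cube, and the generators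
of `H₁` lie in its face `{x_p = x_0 for p ∈ β, x_p = 0 for p ∉ γ}`. A face absorbs
summands: if `h_α + w` lies on it with `w` in the cone, then so does `h_α`, and for the
0/1-vector `h_α` this says `β ⊆ α ⊆ γ`.
-/

/-- The vector `h_α ∈ ℕ^{n+1} ⊆ ℤ^{n+1}` attached to a subset `α` of `P`:
its first coordinate (index `none`) is `1`, and its coordinate at `p ∈ P`
is `1` if `p ∈ α` and `0` otherwise. -/
noncomputable def hvec {P : Type*} (α : Set P) : Option P → ℤ :=
  fun o => o.elim 1 (fun p => Set.indicator α (fun _ => (1 : ℤ)) p)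

section

variable {P : Type*}

@[simp] lemma hvec_none (α : Set P) : hvec α none = 1 := rfl

@[simp] lemma hvec_some (α : Set P) (p : P) : hvec α (some p) = α.indicator 1 p := rfl

variable (P) in
def cubeCone : AddSubmonoid (Option P → ℤ) where
  carrier := {w | ∀ p, 0 ≤ w (some p) ∧ w (some p) ≤ w none}
  zero_mem' := by simp
  add_mem' {u w} hu hw p := by
    simp only [Set.mem_ofPred_eq, Pi.add_apply] at *
    constructor <;> linarith [hu p, hw p]

def faceCone (β γ : Set P) : AddSubmonoid (Option P → ℤ) where
  carrier := {g | (∀ p ∈ β, g (some p) = g none) ∧ ∀ p ∉ γ, g (some p) = 0}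
  zero_mem' := by simp
  add_mem' {u w} hu hw := by
    refine ⟨fun p hp => ?_, fun p hp => ?_⟩
    · simp [hu.1 p hp, hw.1 p hp]
    · simp [hu.2 p hp, hw.2 p hp]

lemma hvec_mem_cubeCone (α : Set P) : hvec α ∈ cubeCone P := fun p => by
  by_cases hp : p ∈ α <;> simp [hp]

lemma hvec_mem_faceCone_iff {α β γ : Set P} : hvec α ∈ faceCone β γ ↔ β ⊆ α ∧ α ⊆ γ := by
  refine ⟨fun ⟨hβ, hγ⟩ => ⟨fun p hp => ?_, fun p hp => ?_⟩,
    fun ⟨hβα, hαγ⟩ => ⟨fun p hp => ?_, fun p hp => ?_⟩⟩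
  · by_contra hpα
    simpa [hpα] using hβ p hp
  · by_contra hpγ
    simpa [hp] using hγ p hpγ
  · simp [hβα hp]
  · simp [show p ∉ α from fun h => hp (hαγ h)]

lemma mem_faceCone_of_add_mem {β γ : Set P} {u w : Option P → ℤ} (hu : u ∈ cubeCone P)
    (hw : w ∈ cubeCone P) (huw : u + w ∈ faceCone β γ) : u ∈ faceCone β γ := by
  refine ⟨fun p hp => ?_, fun p hp => ?_⟩
  · have := huw.1 p hp
    simp only [Pi.add_apply] at this
    linarith [hu p, hw p]
  · have := huw.2 p hp
    simp only [Pi.add_apply] at this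
    linarith [hu p, hw p]

end

theorem stmt4_general (P : Type*) [PartialOrder P]
    (β γ : Set P) :
    ∀ h ∈ AddSubmonoid.closure
        {v : Option P → ℤ | ∃ α : Set P, IsLowerSet α ∧ β ⊆ α ∧ α ⊆ γ ∧ v = hvec α},
      ∀ α : Set P, IsLowerSet α →
        h - hvec α ∈ AddSubmonoid.closure
          {v : Option P → ℤ | ∃ α : Set P, IsLowerSet α ∧ v = hvec α} →
        β ⊆ α ∧ α ⊆ γ := by
  intro h hh α _ hmem
  have h_face : h ∈ faceCone β γ := AddSubmonoid.closure_le.2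
    (by rintro _ ⟨δ, -, hβδ, hδγ, rfl⟩; exact hvec_mem_faceCone_iff.2 ⟨hβδ, hδγ⟩) hh
  have h_cube : h - hvec α ∈ cubeCone P := AddSubmonoid.closure_le.2
    (by rintro _ ⟨δ, -, rfl⟩; exact hvec_mem_cubeCone δ) hmem
  refine hvec_mem_faceCone_iff.1 (mem_faceCone_of_add_mem (hvec_mem_cubeCone α) h_cube ?_)
  rwa [add_sub_cancel]

theorem stmt4 (P : Type*) [Finite P] [PartialOrder P]
    (β γ : Set P) (hβ : IsLowerSet β) (hγ : IsLowerSet γ) (hβγ : β ⊆ γ) :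
    ∀ h ∈ AddSubmonoid.closure
        {v : Option P → ℤ | ∃ α : Set P, IsLowerSet α ∧ β ⊆ α ∧ α ⊆ γ ∧ v = hvec α},
      ∀ α : Set P, IsLowerSet α →
        h - hvec α ∈ AddSubmonoid.closure
          {v : Option P → ℤ | ∃ α : Set P, IsLowerSet α ∧ v = hvec α} →
        β ⊆ α ∧ α ⊆ γ :=
  stmt4_general P β γ
end

section
/- Let P be a finite connected poset (i.e., the comparability graph of P is connected) with at least two minimal elements and at least two maximal elements. Then there exist two maximal chains C₁ and C₂ of P, each containing at least two elements, such that the least element of C₁ is different from the least element of C₂ and the greatest element of C₁ is different from the greatest element of C₂. -/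
/-!
Every element lies in a maximal chain, and a finite maximal chain runs from a minimal to a maximal
element. Connectedness forbids an element that is both minimal and maximal (it would be isolated),
so these endpoints are distinct. Take maximal chains from two distinct minimal elements; if their tops
coincide, a maximal chain ending at another maximal element repairs one of the two pairs.
-/

/-- The comparability graph of a poset: `x` and `y` are adjacent iff `x ≠ y`
and `x, y` are comparable. -/
def comparabilityGraph (P : Type*) [PartialOrder P] : SimpleGraph P where
  Adj a b := a ≠ b ∧ (a ≤ b ∨ b ≤ a)
  symm := by
    constructor
    rintro a b ⟨hab, h⟩
    exact ⟨hab.symm, h.symm⟩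
  loopless := by
    constructor
    rintro a ⟨h, -⟩
    exact h rfl

theorem exists_rel_pairs_fst_ne_snd_ne {α β : Type*} {R : α → β → Prop} {m₁ m₂ : α} {M₁ M₂ : β}
    (hm : m₁ ≠ m₂) (hM : M₁ ≠ M₂) (hm₁ : ∃ b, R m₁ b) (hm₂ : ∃ b, R m₂ b)
    (hM₁ : ∃ a, R a M₁) (hM₂ : ∃ a, R a M₂) :
    ∃ a₁ b₁ a₂ b₂, R a₁ b₁ ∧ R a₂ b₂ ∧ a₁ ≠ a₂ ∧ b₁ ≠ b₂ := by
  obtain ⟨t, ht⟩ := hm₁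
  obtain ⟨s, hs⟩ := hm₂
  by_cases hts : t = s
  · subst hts
    obtain ⟨M, hM, hMt⟩ : ∃ M, (∃ a, R a M) ∧ M ≠ t := by
      by_cases h : M₁ = t
      · exact ⟨M₂, hM₂, h ▸ hM.symm⟩
      · exact ⟨M₁, hM₁, h⟩
    obtain ⟨u, hu⟩ := hM
    by_cases hum : u = m₁
    · exact ⟨u, M, m₂, t, hu, hs, hum ▸ hm, hMt⟩
    · exact ⟨m₁, t, u, M, ht, hu, Ne.symm hum, hMt.symm⟩
  · exact ⟨m₁, t, m₂, s, ht, hs, hm, hts⟩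

section Chains

variable {P : Type*}

theorem IsChain.isLeast_of_minimal [Preorder P] {C : Set P} {a : P}
    (hC : IsChain (· ≤ ·) C) (ha : Minimal (· ∈ C) a) : IsLeast C a :=
  ⟨ha.prop, fun _ hb => (hC.total ha.prop hb).elim id (ha.le_of_le hb)⟩

theorem IsChain.isGreatest_of_maximal [Preorder P] {C : Set P} {b : P}
    (hC : IsChain (· ≤ ·) C) (hb : Maximal (· ∈ C) b) : IsGreatest C b :=
  ⟨hb.prop, fun _ ha => (hC.total hb.prop ha).elim (hb.le_of_ge ha) id⟩

theorem IsMaxChain.isMin_of_isLeast [Preorder P] {C : Set P} {a : P}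
    (hC : IsMaxChain (· ≤ ·) C) (ha : IsLeast C a) : IsMin a := by
  intro y hy
  have hchain : IsChain (· ≤ ·) (insert y C) :=
    hC.1.insert fun b hb _ => Or.inl (hy.trans (ha.2 hb))
  have hyC : y ∈ C := hC.2 hchain (Set.subset_insert y C) ▸ Set.mem_insert y C
  exact ha.2 hyC

theorem IsMaxChain.isMax_of_isGreatest [Preorder P] {C : Set P} {b : P}
    (hC : IsMaxChain (· ≤ ·) C) (hb : IsGreatest C b) : IsMax b := by
  intro y hy
  have hchain : IsChain (· ≤ ·) (insert y C) :=
    hC.1.insert fun a ha _ => Or.inr ((hb.2 ha).trans hy)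
  have hyC : y ∈ C := hC.2 hchain (Set.subset_insert y C) ▸ Set.mem_insert y C
  exact hb.2 hyC

theorem exists_maxChain_isLeast_isGreatest [Finite P] [Preorder P] (x : P) :
    ∃ C : Set P, ∃ a b, IsMaxChain (· ≤ ·) C ∧ x ∈ C ∧ IsLeast C a ∧ IsGreatest C b := by
  obtain ⟨C, hC, hxC⟩ := (Set.subsingleton_singleton (a := x)).isChain.exists_maxChain
  have hne : C.Nonempty := ⟨x, hxC rfl⟩
  obtain ⟨a, ha⟩ := C.toFinite.exists_minimal hne
  obtain ⟨b, hb⟩ := C.toFinite.exists_maximal hne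
  exact ⟨C, a, b, hC, hxC rfl, hC.1.isLeast_of_minimal ha, hC.1.isGreatest_of_maximal hb⟩

def IsMaxChainSpan [Preorder P] (a b : P) : Prop :=
  ∃ C : Set P, IsMaxChain (· ≤ ·) C ∧ IsLeast C a ∧ IsGreatest C b

variable [PartialOrder P] [Finite P]

theorem IsMin.exists_isMaxChainSpan {m : P} (hm : IsMin m) : ∃ b, IsMaxChainSpan m b := by
  obtain ⟨C, a, b, hC, hmC, ha, hb⟩ := exists_maxChain_isLeast_isGreatest m
  obtain rfl : a = m := hm.eq_of_le (ha.2 hmC)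
  exact ⟨b, C, hC, ha, hb⟩

theorem IsMax.exists_isMaxChainSpan {M : P} (hM : IsMax M) : ∃ a, IsMaxChainSpan a M := by
  obtain ⟨C, a, b, hC, hMC, ha, hb⟩ := exists_maxChain_isLeast_isGreatest M
  obtain rfl : b = M := hM.eq_of_ge (hb.2 hMC)
  exact ⟨a, C, hC, ha, hb⟩

end Chains

theorem ne_of_isMin_of_isMax {P : Type*} [PartialOrder P] [Nontrivial P]
    (hconn : (comparabilityGraph P).Preconnected) {a b : P} (ha : IsMin a) (hb : IsMax b) :
    a ≠ b := by
  rintro rfl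
  obtain ⟨c, hne, hac | hca⟩ := hconn.exists_adj_of_nontrivial a
  · exact hne (hb.eq_of_le hac)
  · exact hne (ha.eq_of_ge hca)

theorem stmt9 (P : Type*) [Finite P] [PartialOrder P]
    (hconn : (comparabilityGraph P).Connected)
    (hmin : ∃ a b : P, a ≠ b ∧ IsMin a ∧ IsMin b)
    (hmax : ∃ a b : P, a ≠ b ∧ IsMax a ∧ IsMax b) :
    ∃ C₁ C₂ : Set P, IsMaxChain (· ≤ ·) C₁ ∧ IsMaxChain (· ≤ ·) C₂ ∧
      ∃ a₁ b₁ a₂ b₂ : P,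
        IsLeast C₁ a₁ ∧ IsGreatest C₁ b₁ ∧ IsLeast C₂ a₂ ∧ IsGreatest C₂ b₂ ∧
        a₁ ≠ b₁ ∧ a₂ ≠ b₂ ∧ a₁ ≠ a₂ ∧ b₁ ≠ b₂ := by
  obtain ⟨m₁, m₂, hm, hmin₁, hmin₂⟩ := hmin
  obtain ⟨M₁, M₂, hM, hmax₁, hmax₂⟩ := hmax
  have : Nontrivial P := ⟨m₁, m₂, hm⟩
  obtain ⟨a₁, b₁, a₂, b₂, ⟨C₁, hC₁, ha₁, hb₁⟩, ⟨C₂, hC₂, ha₂, hb₂⟩, ha, hb⟩ :=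
    exists_rel_pairs_fst_ne_snd_ne hm hM hmin₁.exists_isMaxChainSpan
      hmin₂.exists_isMaxChainSpan hmax₁.exists_isMaxChainSpan hmax₂.exists_isMaxChainSpan
  refine ⟨C₁, C₂, hC₁, hC₂, a₁, b₁, a₂, b₂, ha₁, hb₁, ha₂, hb₂, ?_, ?_, ha, hb⟩
  · exact ne_of_isMin_of_isMax hconn.preconnected (hC₁.isMin_of_isLeast ha₁)
      (hC₁.isMax_of_isGreatest hb₁)
  · exact ne_of_isMin_of_isMax hconn.preconnected (hC₂.isMin_of_isLeast ha₂)
      (hC₂.isMax_of_isGreatest hb₂)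
end

section
/- Let P be a finite poset, let P' be the set of all elements of P comparable to every element of P, and let P'' be the induced subposet of P on P \ P'. Let L = I(P) be the distributive lattice of order ideals of P and let G_L be its comparability graph. Then G_L is chordal if and only if P is a chain, or P'' is the disjoint union of a chain and a single isolated element (i.e., there exists q ∈ P'' such that P'' \ {q} is a chain and q is incomparable with every element of P'' \ {q}). -/
/-!
If `x, y, z` are pairwise incomparable, the ideals `↓x, ↓x ∪ ↓y, ↓y, ↓y ∪ ↓z, ↓z, ↓z ∪ ↓x`
form an induced 6-cycle of `G_L`; if `a < b`, `c < d`, `a ∥ c` and `b ∥ d`, the ideals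
`↓a, ↓b ∪ ↓c, ↓c, ↓a ∪ ↓d` form an induced 4-cycle. So when `G_L` is chordal the
incomparability graph of `P` is triangle-free and has no two disjoint edges (once `P` has width
two, two disjoint incomparable pairs always contain such `a, b, c, d`), hence it is a star:
every incomparable pair contains one element `q`, which is the stated shape of `P''`.

Conversely, if all elements other than `q` are pairwise comparable, two incomparable ideals
differ in whether they contain `q`. Along an induced cycle of length `m ≥ 5` this membership
would alternate around the odd cycle `0, 2, 4, 1, 3` of non-adjacent pairs. For `m = 4`, write
the cycle as `a, b, c, d` with `q ∈ a, b` and `q ∉ c, d`; then `c ⊆ b` and `b \ {q} ⊆ d ⊆ a`,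
so `c ⊆ a` although `a` and `c` are opposite.
-/

open SimpleGraph

lemma SimpleGraph.cycleGraph_not_adj_of_le {m : ℕ} {i j : Fin m} (h₁ : i.val + 2 ≤ j.val)
    (h₂ : j.val + 2 ≤ i.val + m) : ¬ (cycleGraph m).Adj i j := by
  have hj := j.isLt
  rw [cycleGraph_adj', Fin.sub_def, Fin.sub_def]
  dsimp only
  rw [Nat.mod_eq_of_lt (by omega), show m - i.val + j.val = (j.val - i.val) + m by omega,
    Nat.add_mod_right, Nat.mod_eq_of_lt (by omega)]
  omega

theorem SimpleGraph.exists_forall_adj_eq_or_eq {V : Type*} {G : SimpleGraph V}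
    (h3 : G.CliqueFree 3)
    (h2 : ∀ a b c d, G.Adj a b → G.Adj c d → a = c ∨ a = d ∨ b = c ∨ b = d)
    {a b : V} (hab : G.Adj a b) : ∃ q, ∀ x y, G.Adj x y → x = q ∨ y = q := by
  classical
  by_cases ha : ∀ x y, G.Adj x y → x = a ∨ y = a
  · exact ⟨a, ha⟩
  push Not at ha
  obtain ⟨c, d, hcd, hca, hda⟩ := ha
  obtain ⟨c', hbc', hc'a⟩ : ∃ c', G.Adj b c' ∧ c' ≠ a := by
    rcases h2 a b c d hab hcd with rfl | rfl | rfl | rfl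
    · exact absurd rfl hca
    · exact absurd rfl hda
    · exact ⟨d, hcd, hda⟩
    · exact ⟨c, hcd.symm, hca⟩
  refine ⟨b, fun x y hxy => ?_⟩
  by_contra! hxyb
  -- the edge `xy` meets both `ab` and `bc'` away from `b`, so it is the edge `ac'`
  have hac' : G.Adj a c' := by
    rcases h2 x y a b hxy hab with rfl | h | rfl | h <;>
      rcases h2 x y b c' hxy hbc' with h' | rfl | h' | rfl <;> first
        | exact absurd h hxyb.1 | exact absurd h hxyb.2 | exact absurd h' hxyb.1
        | exact absurd h' hxyb.2 | exact absurd rfl hc'a | exact hxy | exact hxy.symm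
  exact h3 {a, b, c'} (is3Clique_triple_iff.2 ⟨hab, hac', hbc'⟩)

section ComparabilityGraph

variable {L : Type*} [PartialOrder L]

lemma comparabilityGraph_adj {a b : L} :
    (comparabilityGraph L).Adj a b ↔ a ≠ b ∧ (a ≤ b ∨ b ≤ a) := Iff.rfl

lemma compl_comparabilityGraph_adj {a b : L} :
    (comparabilityGraph L)ᶜ.Adj a b ↔ IncompRel (· ≤ ·) a b := by
  rw [compl_adj, comparabilityGraph_adj, ← not_symmGen_iff]
  exact ⟨fun ⟨hne, h⟩ h' => h ⟨hne, h'⟩,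
    fun h => ⟨fun hab => h (hab ▸ .inl le_rfl), fun h' => h h'.2⟩⟩

lemma nonempty_embedding_comparabilityGraph_of_le_iff {V : Type*} {G : SimpleGraph V}
    (f : V → L) (r : V → V → Prop) (hf : ∀ i j, f i ≤ f j ↔ r i j)
    (hr : ∀ i j, r i j → r j i → i = j) (hG : ∀ i j, G.Adj i j ↔ i ≠ j ∧ (r i j ∨ r j i)) :
    Nonempty (G ↪g comparabilityGraph L) := by
  have hinj : Function.Injective f := fun i j h => hr i j ((hf i j).1 h.le) ((hf j i).1 h.ge)
  refine ⟨⟨⟨f, hinj⟩, fun {i j} => ?_⟩⟩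
  simp only [Function.Embedding.coeFn_mk, comparabilityGraph_adj, hf, hG, hinj.ne_iff]

lemma nonempty_cycleGraph_four_embedding {u v w z : L} (huv : u ≤ v) (huz : u ≤ z)
    (hwv : w ≤ v) (hwz : w ≤ z) (huw : IncompRel (· ≤ ·) u w) (hvz : IncompRel (· ≤ ·) v z) :
    Nonempty (cycleGraph 4 ↪g comparabilityGraph L) := by
  have hvu : ¬ v ≤ u := fun h => huw.not_ge (hwv.trans h)
  have hvw : ¬ v ≤ w := fun h => huw.not_le (huv.trans h)
  have hzu : ¬ z ≤ u := fun h => huw.not_ge (hwz.trans h)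
  have hzw : ¬ z ≤ w := fun h => huw.not_le (huz.trans h)
  refine nonempty_embedding_comparabilityGraph_of_le_iff ![u, v, w, z]
    (fun i j => i = j ∨ (i.val % 2 = 0 ∧ j.val % 2 = 1)) ?_ (by decide) (by decide)
  intro i j
  fin_cases i <;> fin_cases j <;> simp [*, huw.not_le, huw.not_ge, hvz.not_le, hvz.not_ge]

namespace SimpleGraph.Embedding

variable {V : Type*} {G : SimpleGraph V} (e : G ↪g comparabilityGraph L)

lemma le_or_le_of_adj {i j : V} (h : G.Adj i j) : e i ≤ e j ∨ e j ≤ e i :=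
  (e.map_adj_iff.2 h).2

lemma incompRel_of_not_adj {i j : V} (hij : i ≠ j) (h : ¬ G.Adj i j) :
    IncompRel (· ≤ ·) (e i) (e j) :=
  not_symmGen_iff.1 fun h' => h (e.map_adj_iff.1 ⟨e.injective.ne hij, h'⟩)

end SimpleGraph.Embedding

lemma isEmpty_cycleGraph_embedding_of_total (h : ∀ a b : L, a ≤ b ∨ b ≤ a) {m : ℕ}
    (hm : 4 ≤ m) : IsEmpty (cycleGraph m ↪g comparabilityGraph L) :=
  ⟨fun e => not_symmGen_iff.2 (e.incompRel_of_not_adj (i := ⟨0, by omega⟩) (j := ⟨2, by omega⟩)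
    (Fin.ne_of_lt (Fin.mk_lt_mk.2 two_pos))
    (cycleGraph_not_adj_of_le le_rfl (by simpa using hm))) (h _ _)⟩

end ComparabilityGraph

section LowerSets

variable {P : Type*} [PartialOrder P]

lemma lowerClosure_image_le_iff {ι : Type*} {g : ι → P} (hg : ∀ i j, g i ≤ g j → i = j)
    {s t : Set ι} : lowerClosure (g '' s) ≤ lowerClosure (g '' t) ↔ s ⊆ t := by
  refine ⟨fun h i hi => ?_, fun h => lowerClosure_mono (Set.image_mono h)⟩
  obtain ⟨_, ⟨j, hj, rfl⟩, hij⟩ := mem_lowerClosure.1 (h (subset_lowerClosure ⟨i, hi, rfl⟩))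
  exact hg i j hij ▸ hj

lemma nonempty_cycleGraph_six_embedding_of_incompRel {x y z : P}
    (hxy : IncompRel (· ≤ ·) x y) (hyz : IncompRel (· ≤ ·) y z) (hxz : IncompRel (· ≤ ·) x z) :
    Nonempty (cycleGraph 6 ↪g comparabilityGraph {α : Set P // IsLowerSet α}) := by
  have hg : ∀ i j, ![x, y, z] i ≤ ![x, y, z] j → i = j := by
    intro i j
    fin_cases i <;> fin_cases j <;>
      simp [hxy.not_le, hxy.not_ge, hyz.not_le, hyz.not_ge, hxz.not_le, hxz.not_ge]
  let S : Fin 6 → Finset (Fin 3) := ![{0}, {0, 1}, {1}, {1, 2}, {2}, {2, 0}]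
  refine nonempty_embedding_comparabilityGraph_of_le_iff
    (fun i => ⟨lowerClosure (![x, y, z] '' S i), (lowerClosure _).lower⟩)
    (fun i j => S i ⊆ S j) (fun i j => ?_) (by decide) (by decide)
  rw [Subtype.mk_le_mk, LowerSet.coe_subset_coe, lowerClosure_image_le_iff hg, Finset.coe_subset]

lemma nonempty_cycleGraph_four_embedding_of_lt {a b c d : P} (hab : a < b) (hcd : c < d)
    (hac : IncompRel (· ≤ ·) a c) (hbd : IncompRel (· ≤ ·) b d) :
    Nonempty (cycleGraph 4 ↪g comparabilityGraph {α : Set P // IsLowerSet α}) :=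
  nonempty_cycleGraph_four_embedding (u := ⟨Set.Iic a, isLowerSet_Iic a⟩)
    (v := ⟨Set.Iic b ∪ Set.Iic c, (isLowerSet_Iic b).union (isLowerSet_Iic c)⟩)
    (w := ⟨Set.Iic c, isLowerSet_Iic c⟩)
    (z := ⟨Set.Iic a ∪ Set.Iic d, (isLowerSet_Iic a).union (isLowerSet_Iic d)⟩)
    (Set.subset_union_of_subset_left (Set.Iic_subset_Iic.2 hab.le) _) Set.subset_union_left
    Set.subset_union_right (Set.subset_union_of_subset_right (Set.Iic_subset_Iic.2 hcd.le) _)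
    ⟨fun h => hac.not_le (Set.Iic_subset_Iic.1 h), fun h => hac.not_ge (Set.Iic_subset_Iic.1 h)⟩
    ⟨fun h => (h (.inl le_rfl)).elim hab.not_ge hbd.not_le,
      fun h => (h (.inr le_rfl)).elim hbd.not_ge hcd.not_ge⟩

lemma IsLowerSet.mem_of_le_or_le {α β : Set P} (hα : IsLowerSet α) (hβ : IsLowerSet β)
    {v w : P} (hvβ : v ∈ β) (hvα : v ∉ α) (hwα : w ∈ α) (hwv : w ≤ v ∨ v ≤ w) : w ∈ β :=
  hwv.elim (hβ · hvβ) fun h => absurd (hα h hwα) hvα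

lemma IsLowerSet.total_of_forall_le_or_le (h : ∀ a b : P, a ≤ b ∨ b ≤ a) {α β : Set P}
    (hα : IsLowerSet α) (hβ : IsLowerSet β) : α ⊆ β ∨ β ⊆ α := by
  by_contra! hne
  obtain ⟨u, huα, huβ⟩ := Set.not_subset.1 hne.1
  obtain ⟨v, hvβ, hvα⟩ := Set.not_subset.1 hne.2
  exact huβ (hα.mem_of_le_or_le hβ hvβ hvα huα (h u v))

lemma IsLowerSet.diff_singleton_subset_of_not_subset {q : P}
    (hq : ∀ x y : P, x ≠ q → y ≠ q → x ≤ y ∨ y ≤ x) {α β : Set P} (hα : IsLowerSet α)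
    (hβ : IsLowerSet β) (hβα : ¬ β ⊆ α) (hqβ : q ∉ β) : α \ {q} ⊆ β := by
  obtain ⟨v, hvβ, hvα⟩ := Set.not_subset.1 hβα
  exact fun w ⟨hwα, hwq⟩ =>
    hα.mem_of_le_or_le hβ hvβ hvα hwα (hq w v hwq (ne_of_mem_of_not_mem hvβ hqβ))

lemma IsLowerSet.mem_iff_not_mem_of_not_subset {q : P}
    (hq : ∀ x y : P, x ≠ q → y ≠ q → x ≤ y ∨ y ≤ x) {α β : Set P} (hα : IsLowerSet α)
    (hβ : IsLowerSet β) (hαβ : ¬ α ⊆ β) (hβα : ¬ β ⊆ α) : q ∈ α ↔ q ∉ β := by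
  obtain ⟨u, huα, huβ⟩ := Set.not_subset.1 hαβ
  obtain ⟨v, hvβ, hvα⟩ := Set.not_subset.1 hβα
  obtain rfl | rfl : u = q ∨ v = q := by
    by_contra! h
    exact huβ (hα.mem_of_le_or_le hβ hvβ hvα huα (hq u v h.1 h.2))
  · exact iff_of_true huα huβ
  · exact iff_of_false hvα (not_not.2 hvβ)

lemma IsLowerSet.subset_of_le_or_le_of_mem_of_not_mem {q : P}
    (hq : ∀ x y : P, x ≠ q → y ≠ q → x ≤ y ∨ y ≤ x) {a b c d : Set P} (hb : IsLowerSet b)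
    (hd : IsLowerSet d) (hbc : b ⊆ c ∨ c ⊆ b) (hda : d ⊆ a ∨ a ⊆ d) (hdb : ¬ d ⊆ b)
    (hqa : q ∈ a) (hqb : q ∈ b) (hqc : q ∉ c) (hqd : q ∉ d) : c ⊆ a := by
  have hcb : c ⊆ b := hbc.resolve_left fun h => hqc (h hqb)
  have hda : d ⊆ a := hda.resolve_right fun h => hqd (h hqa)
  have hbd : b \ {q} ⊆ d := hb.diff_singleton_subset_of_not_subset hq hd hdb hqd
  exact fun x hx => hda (hbd ⟨hcb hx, ne_of_mem_of_not_mem hx hqc⟩)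

lemma mem_iff_not_mem_of_not_adj {q : P} (hq : ∀ x y : P, x ≠ q → y ≠ q → x ≤ y ∨ y ≤ x)
    {V : Type*} {G : SimpleGraph V} (e : G ↪g comparabilityGraph {α : Set P // IsLowerSet α})
    {i j : V} (hij : i ≠ j) (h : ¬ G.Adj i j) : q ∈ (e i).1 ↔ q ∉ (e j).1 :=
  have hinc := e.incompRel_of_not_adj hij h
  (e i).2.mem_iff_not_mem_of_not_subset hq (e j).2 hinc.not_le hinc.not_ge

lemma isEmpty_cycleGraph_four_embedding {q : P}
    (hq : ∀ x y : P, x ≠ q → y ≠ q → x ≤ y ∨ y ≤ x) :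
    IsEmpty (cycleGraph 4 ↪g comparabilityGraph {α : Set P // IsLowerSet α}) := by
  refine ⟨fun e => ?_⟩
  have key : ∀ a b c d : Fin 4, ((cycleGraph 4).Adj b c ∧ (cycleGraph 4).Adj d a ∧
      a ≠ c ∧ ¬ (cycleGraph 4).Adj a c ∧ b ≠ d ∧ ¬ (cycleGraph 4).Adj b d) →
      q ∈ (e a).1 → q ∈ (e b).1 → False := by
    rintro a b c d ⟨hbc, hda, hac, hac', hbd, hbd'⟩ ha hb
    exact (e.incompRel_of_not_adj hac hac').not_ge <|
      (e b).2.subset_of_le_or_le_of_mem_of_not_mem hq (e d).2 (e.le_or_le_of_adj hbc)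
        (e.le_or_le_of_adj hda) (e.incompRel_of_not_adj hbd hbd').not_ge ha hb
        ((mem_iff_not_mem_of_not_adj hq e hac hac').1 ha)
        ((mem_iff_not_mem_of_not_adj hq e hbd hbd').1 hb)
  have h02 := mem_iff_not_mem_of_not_adj hq e (i := 0) (j := 2) (by decide) (by decide)
  have h13 := mem_iff_not_mem_of_not_adj hq e (i := 1) (j := 3) (by decide) (by decide)
  by_cases h0 : q ∈ (e 0).1 <;> by_cases h1 : q ∈ (e 1).1
  · exact key 0 1 2 3 (by decide) h0 h1
  · exact key 3 0 1 2 (by decide) (by tauto) h0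
  · exact key 1 2 3 0 (by decide) h1 (by tauto)
  · exact key 2 3 0 1 (by decide) (by tauto) (by tauto)

lemma isEmpty_cycleGraph_embedding_of_five_le {q : P}
    (hq : ∀ x y : P, x ≠ q → y ≠ q → x ≤ y ∨ y ≤ x) {m : ℕ} (hm : 5 ≤ m) :
    IsEmpty (cycleGraph m ↪g comparabilityGraph {α : Set P // IsLowerSet α}) := by
  refine ⟨fun e => ?_⟩
  have h : ∀ i j (hi : i < m) (hj : j < m), i + 2 ≤ j → j + 2 ≤ i + m →
      (q ∈ (e ⟨i, hi⟩).1 ↔ q ∉ (e ⟨j, hj⟩).1) := fun i j hi hj h₁ h₂ =>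
    mem_iff_not_mem_of_not_adj hq e (Fin.ne_of_lt (Fin.mk_lt_mk.2 (by omega)))
      (cycleGraph_not_adj_of_le h₁ h₂)
  have := h 0 2 (by omega) (by omega) (by omega) (by omega)
  have := h 2 4 (by omega) (by omega) (by omega) (by omega)
  have := h 1 4 (by omega) (by omega) (by omega) (by omega)
  have := h 1 3 (by omega) (by omega) (by omega) (by omega)
  have := h 0 3 (by omega) (by omega) (by omega) (by omega)
  tauto

lemma isEmpty_cycleGraph_embedding_of_forall_ne {q : P}
    (hq : ∀ x y : P, x ≠ q → y ≠ q → x ≤ y ∨ y ≤ x) {m : ℕ} (hm : 4 ≤ m) :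
    IsEmpty (cycleGraph m ↪g comparabilityGraph {α : Set P // IsLowerSet α}) := by
  obtain rfl | hm := hm.eq_or_lt
  · exact isEmpty_cycleGraph_four_embedding hq
  · exact isEmpty_cycleGraph_embedding_of_five_le hq hm

end LowerSets

section Incomparability

variable {P : Type*} [PartialOrder P]

lemma false_of_incompRel_of_lt
    (h22 : ∀ a b c d : P, a < b → c < d → IncompRel (· ≤ ·) a c → IncompRel (· ≤ ·) b d → False)
    {a b c d : P} (hab : IncompRel (· ≤ ·) a b) (hcd : IncompRel (· ≤ ·) c d) (hac : a < c)
    (hbd : b ≤ d ∨ d ≤ b) (hbd' : b ≠ d) : False := by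
  rcases hbd with hbd | hdb
  · exact h22 a c b d hac (hbd.lt_of_ne hbd') hab hcd
  · exact h22 a c d b hac (hdb.lt_of_ne hbd'.symm)
      ⟨fun h => hab.not_le (h.trans hdb), fun h => hcd.not_ge (h.trans hac.le)⟩
      ⟨fun h => hab.not_le (hac.le.trans h), fun h => hcd.not_ge (hdb.trans h)⟩

lemma false_of_incompRel_of_le_or_le
    (h22 : ∀ a b c d : P, a < b → c < d → IncompRel (· ≤ ·) a c → IncompRel (· ≤ ·) b d → False)
    {a b c d : P} (hab : IncompRel (· ≤ ·) a b) (hcd : IncompRel (· ≤ ·) c d) (hac : a ≠ c)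
    (hbd : b ≠ d) (hac' : a ≤ c ∨ c ≤ a) (hbd' : b ≤ d ∨ d ≤ b) : False := by
  rcases hac' with h | h
  · exact false_of_incompRel_of_lt h22 hab hcd (h.lt_of_ne hac) hbd' hbd
  · exact false_of_incompRel_of_lt h22 hcd hab (h.lt_of_ne hac.symm) hbd'.symm hbd.symm

lemma eq_or_eq_of_incompRel_of_incompRel
    (h22 : ∀ a b c d : P, a < b → c < d → IncompRel (· ≤ ·) a c → IncompRel (· ≤ ·) b d → False)
    (h3 : (comparabilityGraph P)ᶜ.CliqueFree 3) {a b c d : P} (hab : IncompRel (· ≤ ·) a b)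
    (hcd : IncompRel (· ≤ ·) c d) : a = c ∨ a = d ∨ b = c ∨ b = d := by
  classical
  by_contra! hne
  have comp : ∀ x y z : P, IncompRel (· ≤ ·) x y → IncompRel (· ≤ ·) x z → y ≤ z ∨ z ≤ y :=
    fun x y z hxy hxz => not_incompRel_iff_symmGen.1 fun hyz => h3 {x, y, z} <|
      is3Clique_triple_iff.2 (by simp only [compl_comparabilityGraph_adj]; exact ⟨hxy, hxz, hyz⟩)
  -- each of `a, b, c, d` is comparable to one of the other pair, so the comparabilities
  -- between `{a, b}` and `{c, d}` contain a perfect matching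
  by_cases hac : a ≤ c ∨ c ≤ a
  · by_cases hbd : b ≤ d ∨ d ≤ b
    · exact false_of_incompRel_of_le_or_le h22 hab hcd hne.1 hne.2.2.2 hac hbd
    · have hbd := not_symmGen_iff.1 hbd
      exact false_of_incompRel_of_le_or_le h22 hab hcd.symm hne.2.1 hne.2.2.1
        (comp b a d hab.symm hbd) (comp d b c hbd.symm hcd.symm)
  · have hac := not_symmGen_iff.1 hac
    exact false_of_incompRel_of_le_or_le h22 hab hcd.symm hne.2.1 hne.2.2.1
      (comp c a d hac.symm hcd) (comp a b c hab hac)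

lemma exists_forall_incompRel_eq_or_eq
    (h6 : IsEmpty (cycleGraph 6 ↪g comparabilityGraph {α : Set P // IsLowerSet α}))
    (h4 : IsEmpty (cycleGraph 4 ↪g comparabilityGraph {α : Set P // IsLowerSet α}))
    {a b : P} (hab : IncompRel (· ≤ ·) a b) :
    ∃ q, ∀ x y : P, IncompRel (· ≤ ·) x y → x = q ∨ y = q := by
  classical
  have h3 : (comparabilityGraph P)ᶜ.CliqueFree 3 := by
    intro s hs
    obtain ⟨x, y, z, hxy, hxz, hyz, -⟩ := is3Clique_iff.1 hs
    simp only [compl_comparabilityGraph_adj] at hxy hxz hyz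
    exact h6.false (nonempty_cycleGraph_six_embedding_of_incompRel hxy hyz hxz).some
  have h22 (a b c d : P) (hab : a < b) (hcd : c < d) (hac : IncompRel (· ≤ ·) a c)
      (hbd : IncompRel (· ≤ ·) b d) : False :=
    h4.false (nonempty_cycleGraph_four_embedding_of_lt hab hcd hac hbd).some
  simpa only [compl_comparabilityGraph_adj] using exists_forall_adj_eq_or_eq h3
    (fun a b c d hab hcd => eq_or_eq_of_incompRel_of_incompRel h22 h3
      (compl_comparabilityGraph_adj.1 hab) (compl_comparabilityGraph_adj.1 hcd))
    (compl_comparabilityGraph_adj.2 hab)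

end Incomparability

theorem stmt11_general (P : Type*) [PartialOrder P] :
    (∀ m : ℕ, 4 ≤ m →
        IsEmpty (SimpleGraph.cycleGraph m ↪g
          comparabilityGraph {α : Set P // IsLowerSet α})) ↔
      ((∀ a b : P, a ≤ b ∨ b ≤ a) ∨
        ∃ q : {p : P // ¬ ∀ r : P, p ≤ r ∨ r ≤ p},
          (∀ r : {p : P // ¬ ∀ r : P, p ≤ r ∨ r ≤ p},
              r ≠ q → ¬((r : P) ≤ (q : P) ∨ (q : P) ≤ (r : P))) ∧
          (∀ r s : {p : P // ¬ ∀ r : P, p ≤ r ∨ r ≤ p},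
              r ≠ q → s ≠ q → ((r : P) ≤ (s : P) ∨ (s : P) ≤ (r : P)))) := by
  constructor
  · intro hL
    by_cases hchain : ∀ a b : P, a ≤ b ∨ b ≤ a
    · exact .inl hchain
    obtain ⟨a, b, hab⟩ : ∃ a b : P, IncompRel (· ≤ ·) a b := by simpa [IncompRel] using hchain
    obtain ⟨q, hq⟩ := exists_forall_incompRel_eq_or_eq (hL 6 (by norm_num)) (hL 4 le_rfl) hab
    have hqinc : ¬ ∀ s : P, q ≤ s ∨ s ≤ q := fun h => by
      rcases hq a b hab with rfl | rfl
      exacts [not_symmGen_iff.2 hab (h b), not_symmGen_iff.2 hab (h a).symm]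
    refine .inr ⟨⟨q, hqinc⟩, fun r hrq => ?_, fun r s hrq hsq => ?_⟩
    · obtain ⟨s, hs⟩ : ∃ s, IncompRel (· ≤ ·) r.1 s := by simpa [IncompRel] using r.2
      obtain rfl := (hq r s hs).resolve_left (Subtype.coe_ne_coe.2 hrq)
      exact not_symmGen_iff.2 hs
    · by_contra h
      rcases hq r s (not_symmGen_iff.1 h) with h | h
      exacts [hrq (Subtype.ext h), hsq (Subtype.ext h)]
  · rintro (hchain | ⟨q, -, hq⟩) m hm
    · exact isEmpty_cycleGraph_embedding_of_total
        (fun α β => α.2.total_of_forall_le_or_le hchain β.2) hm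
    · refine isEmpty_cycleGraph_embedding_of_forall_ne (q := q.1) (fun x y hx hy => ?_) hm
      by_cases hx' : ∀ r, x ≤ r ∨ r ≤ x
      · exact hx' y
      by_cases hy' : ∀ r, y ≤ r ∨ r ≤ y
      · exact (hy' x).symm
      exact hq ⟨x, hx'⟩ ⟨y, hy'⟩ (fun h => hx (congrArg Subtype.val h))
        (fun h => hy (congrArg Subtype.val h))

theorem stmt11 (P : Type*) [Finite P] [PartialOrder P] :
    (∀ m : ℕ, 4 ≤ m →
        IsEmpty (SimpleGraph.cycleGraph m ↪g
          comparabilityGraph {α : Set P // IsLowerSet α})) ↔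
      ((∀ a b : P, a ≤ b ∨ b ≤ a) ∨
        ∃ q : {p : P // ¬ ∀ r : P, p ≤ r ∨ r ≤ p},
          (∀ r : {p : P // ¬ ∀ r : P, p ≤ r ∨ r ≤ p},
              r ≠ q → ¬((r : P) ≤ (q : P) ∨ (q : P) ≤ (r : P))) ∧
          (∀ r s : {p : P // ¬ ∀ r : P, p ≤ r ∨ r ≤ p},
              r ≠ q → s ≠ q → ((r : P) ≤ (s : P) ∨ (s : P) ≤ (r : P)))) :=
  stmt11_general P
end
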